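/- For all k, ℓ ∈ ℤ² ∖ {(0,0)}, with a = (k₂ℓ₁ − k₁ℓ₂)/(|k||ℓ|), one has 𝒥^{1,1}_{k,ℓ}(x) + 𝒥^{0,0}_{ℓ,k}(x) = a·sin((k−ℓ)·x)·(k₂ + ℓ₂, −(k₁ + ℓ₁)) for all x ∈ ℝ²; moreover, if k ≠ ℓ then ⟨𝒥^{1,1}_{k,ℓ} + 𝒥^{0,0}_{ℓ,k}, e^1_{k−ℓ}⟩_{L²} = 2π²·a·(|ℓ|² − |k|²)/|k−ℓ|. -/

import Mathlib

open MeasureTheory intervalIntegral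

/-- Euclidean norm of an integer vector. -/
noncomputable def znorm (k : ℤ × ℤ) : ℝ := Real.sqrt ((k.1 : ℝ) ^ 2 + (k.2 : ℝ) ^ 2)

/-- The pairing `k · x = k₁x₁ + k₂x₂`. -/
noncomputable def kdot (k : ℤ × ℤ) (x : ℝ × ℝ) : ℝ := (k.1 : ℝ) * x.1 + (k.2 : ℝ) * x.2

/-- The vector field `e_k^0(x) = (k₂/|k|, −k₁/|k|)·cos(k·x)`. -/
noncomputable def e0 (k : ℤ × ℤ) : ℝ × ℝ → ℝ × ℝ := fun x =>
  (((k.2 : ℝ) / znorm k) * Real.cos (kdot k x), (-(k.1 : ℝ) / znorm k) * Real.cos (kdot k x))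

/-- The vector field `e_k^1(x) = (−k₂/|k|, k₁/|k|)·sin(k·x)`. -/
noncomputable def e1 (k : ℤ × ℤ) : ℝ × ℝ → ℝ × ℝ := fun x =>
  ((-(k.2 : ℝ) / znorm k) * Real.sin (kdot k x), ((k.1 : ℝ) / znorm k) * Real.sin (kdot k x))

/-- The advection `b(u,v) = (u·∇)v`, i.e. the derivative of `v` in the direction `u`. -/
noncomputable def adv (u v : ℝ × ℝ → ℝ × ℝ) : ℝ × ℝ → ℝ × ℝ := fun x => fderiv ℝ v x (u x)

/-- The `L²` pairing `⟨f,g⟩ = ∫_{[−π,π]²} f(x)·g(x) dx`. -/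
noncomputable def pairL2 (f g : ℝ × ℝ → ℝ × ℝ) : ℝ :=
  ∫ x in Set.Icc ((-Real.pi, -Real.pi) : ℝ × ℝ) ((Real.pi, Real.pi) : ℝ × ℝ),
    ((f x).1 * (g x).1 + (f x).2 * (g x).2)

/-- `𝒥^{0,1}_{k,ℓ} = b(e_k^0, e_ℓ^1) + b(e_ℓ^1, e_k^0)`. -/
noncomputable def J01 (k l : ℤ × ℤ) : ℝ × ℝ → ℝ × ℝ := fun x =>
  adv (e0 k) (e1 l) x + adv (e1 l) (e0 k) x

/-- `𝒥^{0,0}_{k,ℓ} = b(e_k^0, e_ℓ^0) + b(e_ℓ^0, e_k^0)`. -/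
noncomputable def J00 (k l : ℤ × ℤ) : ℝ × ℝ → ℝ × ℝ := fun x =>
  adv (e0 k) (e0 l) x + adv (e0 l) (e0 k) x

/-- `𝒥^{1,1}_{k,ℓ} = b(e_k^1, e_ℓ^1) + b(e_ℓ^1, e_k^1)`. -/
noncomputable def J11 (k l : ℤ × ℤ) : ℝ × ℝ → ℝ × ℝ := fun x =>
  adv (e1 k) (e1 l) x + adv (e1 l) (e1 k) x

/-- `𝒵^{0,1}_{k,ℓ} = b(e_k^0, e_ℓ^1) − b(e_ℓ^1, e_k^0)`. -/
noncomputable def Z01 (k l : ℤ × ℤ) : ℝ × ℝ → ℝ × ℝ := fun x =>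
  adv (e0 k) (e1 l) x - adv (e1 l) (e0 k) x

/-- `𝒵^{0,0}_{k,ℓ} = b(e_k^0, e_ℓ^0) − b(e_ℓ^0, e_k^0)`. -/
noncomputable def Z00 (k l : ℤ × ℤ) : ℝ × ℝ → ℝ × ℝ := fun x =>
  adv (e0 k) (e0 l) x - adv (e0 l) (e0 k) x

/-- `𝒵^{1,1}_{k,ℓ} = b(e_k^1, e_ℓ^1) − b(e_ℓ^1, e_k^1)`. -/
noncomputable def Z11 (k l : ℤ × ℤ) : ℝ × ℝ → ℝ × ℝ := fun x =>
  adv (e1 k) (e1 l) x - adv (e1 l) (e1 k) x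

/-! ### Auxiliary lemmas -/

noncomputable def klm (k : ℤ × ℤ) : (ℝ × ℝ) →L[ℝ] ℝ :=
  (k.1 : ℝ) • (ContinuousLinearMap.fst ℝ ℝ ℝ) + (k.2 : ℝ) • (ContinuousLinearMap.snd ℝ ℝ ℝ)

lemma klm_apply (k : ℤ × ℤ) (x : ℝ × ℝ) : klm k x = kdot k x := by
  simp [klm, kdot, smul_eq_mul]

lemma hasFDerivAt_kdot (k : ℤ × ℤ) (x : ℝ × ℝ) : HasFDerivAt (kdot k) (klm k) x := by
  have h := (klm k).hasFDerivAt (x := x)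
  have : kdot k = fun y => klm k y := by funext y; rw [klm_apply]
  rw [this]; exact h

lemma hasFDerivAt_sin_kdot (k : ℤ × ℤ) (x : ℝ × ℝ) :
    HasFDerivAt (fun x => Real.sin (kdot k x)) (Real.cos (kdot k x) • klm k) x :=
  (Real.hasDerivAt_sin (kdot k x)).comp_hasFDerivAt x (hasFDerivAt_kdot k x)

lemma hasFDerivAt_cos_kdot (k : ℤ × ℤ) (x : ℝ × ℝ) :
    HasFDerivAt (fun x => Real.cos (kdot k x)) ((-Real.sin (kdot k x)) • klm k) x :=
  (Real.hasDerivAt_cos (kdot k x)).comp_hasFDerivAt x (hasFDerivAt_kdot k x)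

lemma adv_sin (c1 c2 : ℝ) (k : ℤ × ℤ) (u : ℝ × ℝ → ℝ × ℝ) (x : ℝ × ℝ) :
    adv u (fun y => (c1 * Real.sin (kdot k y), c2 * Real.sin (kdot k y))) x =
      (c1 * (Real.cos (kdot k x) * kdot k (u x)),
       c2 * (Real.cos (kdot k x) * kdot k (u x))) := by
  have h1 : HasFDerivAt (fun y => c1 * Real.sin (kdot k y))
      (c1 • (Real.cos (kdot k x) • klm k)) x := (hasFDerivAt_sin_kdot k x).const_mul c1
  have h2 : HasFDerivAt (fun y => c2 * Real.sin (kdot k y))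
      (c2 • (Real.cos (kdot k x) • klm k)) x := (hasFDerivAt_sin_kdot k x).const_mul c2
  have h := h1.prodMk h2
  simp only [adv, h.fderiv]
  simp [klm_apply, mul_assoc]

lemma adv_cos (c1 c2 : ℝ) (k : ℤ × ℤ) (u : ℝ × ℝ → ℝ × ℝ) (x : ℝ × ℝ) :
    adv u (fun y => (c1 * Real.cos (kdot k y), c2 * Real.cos (kdot k y))) x =
      (c1 * (-Real.sin (kdot k x) * kdot k (u x)),
       c2 * (-Real.sin (kdot k x) * kdot k (u x))) := by
  have h1 : HasFDerivAt (fun y => c1 * Real.cos (kdot k y))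
      (c1 • ((-Real.sin (kdot k x)) • klm k)) x := (hasFDerivAt_cos_kdot k x).const_mul c1
  have h2 : HasFDerivAt (fun y => c2 * Real.cos (kdot k y))
      (c2 • ((-Real.sin (kdot k x)) • klm k)) x := (hasFDerivAt_cos_kdot k x).const_mul c2
  have h := h1.prodMk h2
  simp only [adv, h.fderiv]
  simp [klm_apply, mul_assoc]

lemma znorm_pos (k : ℤ × ℤ) (hk : k ≠ (0, 0)) : 0 < znorm k := by
  have h1 : k.1 ≠ 0 ∨ k.2 ≠ 0 := by
    by_contra h
    push_neg at h
    exact hk (Prod.ext h.1 h.2)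
  have h : 0 < (k.1 : ℝ) ^ 2 + (k.2 : ℝ) ^ 2 := by
    rcases h1 with h1 | h1
    · have : (k.1 : ℝ) ≠ 0 := Int.cast_ne_zero.mpr h1
      positivity
    · have : (k.2 : ℝ) ≠ 0 := Int.cast_ne_zero.mpr h1
      positivity
  exact Real.sqrt_pos.mpr h

lemma znorm_sq (k : ℤ × ℤ) : znorm k ^ 2 = (k.1 : ℝ) ^ 2 + (k.2 : ℝ) ^ 2 :=
  Real.sq_sqrt (by positivity)

lemma kdot_sub (k l : ℤ × ℤ) (x : ℝ × ℝ) : kdot (k - l) x = kdot k x - kdot l x := by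
  simp only [kdot, Prod.fst_sub, Prod.snd_sub]
  push_cast
  ring

lemma e0_eq (k : ℤ × ℤ) : e0 k = fun x =>
    (((k.2 : ℝ) / znorm k) * Real.cos (kdot k x), (-(k.1 : ℝ) / znorm k) * Real.cos (kdot k x)) := rfl

lemma e1_eq (k : ℤ × ℤ) : e1 k = fun x =>
    ((-(k.2 : ℝ) / znorm k) * Real.sin (kdot k x), ((k.1 : ℝ) / znorm k) * Real.sin (kdot k x)) := rfl

lemma pointwise (k l : ℤ × ℤ) (hk : k ≠ (0, 0)) (hl : l ≠ (0, 0)) (a : ℝ)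
    (ha : a = ((k.2 : ℝ) * (l.1 : ℝ) - (k.1 : ℝ) * (l.2 : ℝ)) / (znorm k * znorm l)) (x : ℝ × ℝ) :
    J11 k l x + J00 l k x =
      (a * Real.sin (kdot (k - l) x) * ((k.2 : ℝ) + (l.2 : ℝ)),
       a * Real.sin (kdot (k - l) x) * (-((k.1 : ℝ) + (l.1 : ℝ)))) := by
  have hnk := (znorm_pos k hk).ne'
  have hnl := (znorm_pos l hl).ne'
  simp only [J11, J00, e0_eq, e1_eq]
  rw [adv_sin, adv_sin, adv_cos, adv_cos, kdot_sub, Real.sin_sub, ha]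
  simp only [kdot, Prod.mk_add_mk, Prod.mk.injEq]
  constructor <;> (field_simp; ring)

lemma sin_sq' (x : ℝ) : Real.sin x ^ 2 = 1/2 - Real.cos (2*x)/2 := by
  have h1 := Real.sin_sq_add_cos_sq x
  have h2 := Real.cos_two_mul x
  nlinarith

lemma intA (q : ℤ) (hq : q ≠ 0) (c : ℝ) :
    ∫ x in (-Real.pi)..Real.pi, Real.cos (c + q * x) = 0 := by
  have hq' : (q : ℝ) ≠ 0 := Int.cast_ne_zero.mpr hq
  have key : ∀ x : ℝ, HasDerivAt (fun x => Real.sin (c + q * x) / q) (Real.cos (c + q * x)) x := by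
    intro x
    have h1 : HasDerivAt (fun x : ℝ => c + q * x) (q : ℝ) x := by
      simpa using ((hasDerivAt_id x).const_mul (q : ℝ)).const_add c
    have h2 := ((Real.hasDerivAt_sin (c + q * x)).comp x h1).div_const (q : ℝ)
    simpa [mul_div_assoc, mul_div_cancel_right₀ _ hq'] using h2
  have hcont : Continuous fun x : ℝ => Real.cos (c + q * x) := by continuity
  rw [integral_eq_sub_of_hasDerivAt (fun x _ => key x) (hcont.intervalIntegrable _ _)]
  have h0 : Real.sin ((q : ℝ) * Real.pi) = 0 := Real.sin_int_mul_pi q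
  rw [show c + (q : ℝ) * -Real.pi = c - q * Real.pi by ring, Real.sin_add, Real.sin_sub, h0]
  ring

lemma box_eq : Set.Icc ((-Real.pi, -Real.pi) : ℝ × ℝ) ((Real.pi, Real.pi) : ℝ × ℝ) =
    Set.Icc (-Real.pi) Real.pi ×ˢ Set.Icc (-Real.pi) Real.pi := Set.Icc_prod_eq _ _

lemma icc_int_eq (f : ℝ → ℝ) : ∫ x in Set.Icc (-Real.pi) Real.pi, f x = ∫ x in (-Real.pi)..Real.pi, f x := by
  rw [integral_Icc_eq_integral_Ioc, intervalIntegral.integral_of_le (by linarith [Real.pi_pos])]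

lemma cont_kdot (m : ℤ × ℤ) : Continuous (kdot m) := by
  unfold kdot; fun_prop

lemma intB (m : ℤ × ℤ) (hm : m ≠ (0, 0)) :
    ∫ x in Set.Icc ((-Real.pi, -Real.pi) : ℝ × ℝ) ((Real.pi, Real.pi) : ℝ × ℝ),
      Real.cos (kdot m x) = 0 := by
  have hcont : Continuous fun x : ℝ × ℝ => Real.cos (kdot m x) := Real.continuous_cos.comp (cont_kdot m)
  rw [box_eq, Measure.volume_eq_prod,
    setIntegral_prod _ ((hcont.continuousOn).integrableOn_compact (isCompact_Icc.prod isCompact_Icc))]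
  by_cases h2 : m.2 ≠ 0
  · have : ∀ x : ℝ, (∫ y in Set.Icc (-Real.pi) Real.pi, Real.cos (kdot m (x, y))) = 0 := by
      intro x
      rw [icc_int_eq]
      simpa [kdot] using intA m.2 h2 ((m.1 : ℝ) * x)
    simp only [this, MeasureTheory.integral_zero]
  · push_neg at h2
    have h1 : m.1 ≠ 0 := by
      intro h1; exact hm (Prod.ext h1 h2)
    have : ∀ x : ℝ, (∫ y in Set.Icc (-Real.pi) Real.pi, Real.cos (kdot m (x, y)))
        = 2 * Real.pi * Real.cos ((m.1 : ℝ) * x) := by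
      intro x
      rw [icc_int_eq]
      simp only [kdot, h2, Int.cast_zero, zero_mul, add_zero]
      rw [intervalIntegral.integral_const]
      simp [smul_eq_mul]
      left; ring
    rw [MeasureTheory.setIntegral_congr_fun measurableSet_Icc (fun x _ => this x), icc_int_eq]
    have := intA m.1 h1 0
    simp only [zero_add] at this
    rw [intervalIntegral.integral_const_mul, this, mul_zero]

lemma kdot_two (m : ℤ × ℤ) (x : ℝ × ℝ) : kdot (2 * m.1, 2 * m.2) x = 2 * kdot m x := by
  simp only [kdot]; push_cast; ring

lemma vol_box : (volume (Set.Icc ((-Real.pi, -Real.pi) : ℝ × ℝ) ((Real.pi, Real.pi) : ℝ × ℝ))).toReal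
    = 4 * Real.pi ^ 2 := by
  have hpi : (0:ℝ) ≤ 2 * Real.pi := by positivity
  rw [box_eq, Measure.volume_eq_prod, Measure.prod_prod, Real.volume_Icc,
    show Real.pi - -Real.pi = 2 * Real.pi by ring, ← ENNReal.ofReal_mul hpi,
    ENNReal.toReal_ofReal (by positivity)]
  ring

lemma intC (m : ℤ × ℤ) (hm : m ≠ (0, 0)) :
    ∫ x in Set.Icc ((-Real.pi, -Real.pi) : ℝ × ℝ) ((Real.pi, Real.pi) : ℝ × ℝ),
      Real.sin (kdot m x) ^ 2 = 2 * Real.pi ^ 2 := by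
  have hm2 : ((2 * m.1, 2 * m.2) : ℤ × ℤ) ≠ (0, 0) := by
    intro h
    rw [Prod.ext_iff] at h
    simp only at h
    apply hm
    rw [Prod.ext_iff]
    omega
  have hk2 : ∀ x : ℝ × ℝ, Real.sin (kdot m x) ^ 2 = 1/2 - Real.cos (kdot (2 * m.1, 2 * m.2) x) / 2 := by
    intro x; rw [kdot_two, sin_sq']
  have hInt1 : IntegrableOn (fun _ : ℝ × ℝ => (1:ℝ)/2)
      (Set.Icc ((-Real.pi, -Real.pi) : ℝ × ℝ) ((Real.pi, Real.pi) : ℝ × ℝ)) volume := by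
    refine integrableOn_const ?_
    rw [box_eq]
    exact (isCompact_Icc.prod isCompact_Icc).measure_lt_top.ne
  have hInt2 : IntegrableOn (fun x : ℝ × ℝ => Real.cos (kdot (2 * m.1, 2 * m.2) x) / 2)
      (Set.Icc ((-Real.pi, -Real.pi) : ℝ × ℝ) ((Real.pi, Real.pi) : ℝ × ℝ)) volume := by
    rw [box_eq]
    exact ((Real.continuous_cos.comp (cont_kdot _)).div_const 2).continuousOn.integrableOn_compact
      (isCompact_Icc.prod isCompact_Icc)
  rw [setIntegral_congr_fun measurableSet_Icc (fun x _ => hk2 x), integral_sub hInt1 hInt2,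
    setIntegral_const, smul_eq_mul, measureReal_def, vol_box, MeasureTheory.integral_div, intB _ hm2]
  ring

theorem J11_J00_sum_identity_and_pairing (k l : ℤ × ℤ) (hk : k ≠ (0, 0)) (hl : l ≠ (0, 0))
    (a : ℝ) (ha : a = ((k.2 : ℝ) * (l.1 : ℝ) - (k.1 : ℝ) * (l.2 : ℝ)) / (znorm k * znorm l)) :
    (∀ x : ℝ × ℝ,
      J11 k l x + J00 l k x =
        (a * Real.sin (kdot (k - l) x) * ((k.2 : ℝ) + (l.2 : ℝ)),
         a * Real.sin (kdot (k - l) x) * (-((k.1 : ℝ) + (l.1 : ℝ))))) ∧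
    (k ≠ l →
      pairL2 (fun x => J11 k l x + J00 l k x) (e1 (k - l)) =
        2 * Real.pi ^ 2 * a * ((znorm l) ^ 2 - (znorm k) ^ 2) / znorm (k - l)) := by
  refine ⟨pointwise k l hk hl a ha, fun hkl => ?_⟩
  have hm : k - l ≠ (0, 0) := by
    have := sub_ne_zero.mpr hkl
    simpa [Prod.ext_iff, sub_eq_zero] using this
  have hnm := (znorm_pos _ hm).ne'
  set C : ℝ := a * ((znorm l) ^ 2 - (znorm k) ^ 2) / znorm (k - l) with hC
  have key : ∀ x : ℝ × ℝ,
      ((J11 k l x + J00 l k x).1 * (e1 (k - l) x).1 +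
        (J11 k l x + J00 l k x).2 * (e1 (k - l) x).2) =
      C * Real.sin (kdot (k - l) x) ^ 2 := by
    intro x
    rw [pointwise k l hk hl a ha x, e1_eq]
    simp only [Prod.fst_sub, Prod.snd_sub]
    rw [hC, znorm_sq k, znorm_sq l]
    field_simp
    push_cast
    ring
  simp only [pairL2]
  rw [setIntegral_congr_fun measurableSet_Icc (fun x _ => key x),
    MeasureTheory.integral_const_mul, intC _ hm]
  rw [hC]
  ring
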